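/- Let M ∈ ℂ with M ≠ 0 and y ∈ ℂ, set P = [[M, 1], [0, M⁻¹]], Q = [[M, 0], [2−y, M⁻¹]], and x = M + M⁻¹. Let W = (QP⁻¹)^m (QP) (Q⁻¹P)^m for an integer m. Then W₁₁ + (M⁻¹ − M)·W₁₂ = 1 + (y+2−x²)·S_{m−1}(y)·(S_m(y) − S_{m−1}(y)), where W₁₁ and W₁₂ are the (1,1)- and (1,2)-entries of W. -/

import Mathlib

open Polynomial

/-- Integer-indexed Chebyshev-like polynomials: `S 0 = 1`, `S 1 = X`,
and `S (l+1) = X * S l - S (l-1)` for all `l : ℤ`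
(equivalently `S l = U_l (v/2)` for the Chebyshev polynomials `U` of the second kind). -/
@[semireducible] noncomputable def chebS (R : Type*) [CommRing R] : ℤ → R[X]
  | 0 => 1
  | 1 => X
  | (n : ℕ) + 2 => X * chebS R (n + 1) - chebS R n
  | -((n : ℕ) + 1) => X * chebS R (-n) - chebS R (-n + 1)
  termination_by n => Int.natAbs n + Int.natAbs (n - 1)

/-!
`A = QP⁻¹` and `B = Q⁻¹P` have determinant `1` and trace `y`, so by Cayley–Hamilton
`A² = yA - 1`, and induction on the exponent gives `A^m = S_{m-1}(y) A - S_{m-2}(y)`, likewise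
for `B`. Substituting into `W = A^m (QP) B^m`, the dependence on `M` cancels and the two sides
differ exactly by the Cassini-type identity `S_{m-1}(y)² + S_{m-2}(y)² - y S_{m-1}(y) S_{m-2}(y) = 1`.
-/

theorem chebS_eq_S (R : Type*) [CommRing R] : chebS R = Chebyshev.S R := by
  funext n
  induction n using Chebyshev.induct with
  | zero => rw [chebS.eq_1, Chebyshev.S_zero]
  | one => rw [chebS.eq_2, Chebyshev.S_one]
  | add_two n ih₁ ih₀ => rw [Chebyshev.S_add_two, ← ih₁, ← ih₀]; exact chebS.eq_3 R n
  | neg_add_one n ih₀ ih₁ =>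
    rw [Chebyshev.S_sub_one, ← ih₀, ← ih₁, ← neg_add', ← Int.negSucc_eq]
    exact chebS.eq_4 R n

namespace Matrix

variable {n R : Type*} [Fintype n] [DecidableEq n] [CommRing R]

theorem inv_eq_adjugate_of_det_eq_one {A : Matrix n n R} (hA : A.det = 1) : A⁻¹ = A.adjugate := by
  rw [inv_def, hA, Ring.inverse_one, one_smul]

theorem zpow_eq_of_mul_self_eq {A : Matrix n n R} {t : R} (hA : A * A = t • A - 1) (m : ℤ) :
    A ^ m = (Chebyshev.S R (m - 1)).eval t • A - (Chebyshev.S R (m - 2)).eval t • 1 := by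
  have hinv : A * (t • 1 - A) = 1 := by
    rw [mul_sub, mul_smul_comm, mul_one, hA]
    abel
  have hdet : IsUnit A.det := isUnit_det_of_right_inverse hinv
  induction m using Int.induction_on with
  | zero => simp
  | succ k ih =>
    rw [zpow_add_one hdet, ih, add_sub_cancel_right, show (k : ℤ) + 1 - 2 = k - 1 by ring,
      Chebyshev.S_eq R k, sub_mul, smul_mul_assoc, smul_mul_assoc, one_mul, hA]
    simp only [eval_sub, eval_mul, eval_X]
    module
  | pred k ih =>
    rw [zpow_sub_one hdet, ih, inv_eq_right_inv hinv, show -(k : ℤ) - 1 - 1 = -k - 2 by ring,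
      show -(k : ℤ) - 1 - 2 = -k - 1 - 2 by ring, Chebyshev.S_sub_two R (-k - 1),
      show -(k : ℤ) - 1 - 1 = -k - 2 by ring, sub_mul, smul_mul_assoc, smul_mul_assoc, one_mul,
      hinv]
    simp only [eval_sub, eval_mul, eval_X]
    module

theorem adjugate_fin_two_eq_trace_smul_sub (A : Matrix (Fin 2) (Fin 2) R) :
    A.adjugate = A.trace • 1 - A := by
  ext i j
  fin_cases i <;> fin_cases j <;> simp [adjugate_fin_two, trace_fin_two]

theorem mul_self_eq_trace_smul_sub_one {A : Matrix (Fin 2) (Fin 2) R} (hA : A.det = 1) :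
    A * A = A.trace • A - 1 := by
  have h := mul_adjugate A
  rw [hA, one_smul, adjugate_fin_two_eq_trace_smul_sub, mul_sub, mul_smul_comm, mul_one] at h
  rw [← h, sub_sub_cancel]

theorem zpow_fin_two_eq_of_det_eq_one {A : Matrix (Fin 2) (Fin 2) R} (hA : A.det = 1) (m : ℤ) :
    A ^ m = (Chebyshev.S R (m - 1)).eval A.trace • A - (Chebyshev.S R (m - 2)).eval A.trace • 1 :=
  zpow_eq_of_mul_self_eq (mul_self_eq_trace_smul_sub_one hA) m

end Matrix

/-- For `W = (QP⁻¹)^m (QP) (Q⁻¹P)^m` with `P = [[M,1],[0,M⁻¹]]`, `Q = [[M,0],[2-y,M⁻¹]]` and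
`x = M + M⁻¹`, one has `W₁₁ + (M⁻¹ - M)·W₁₂ = 1 + (y+2-x²)·S_{m-1}(y)·(S_m(y) - S_{m-1}(y))`. -/
theorem odd_word_Riley_factor (M y : ℂ) (hM : M ≠ 0) (m : ℤ)
    (W : Matrix (Fin 2) (Fin 2) ℂ)
    (hW : W = (!![M, 0; 2 - y, M⁻¹] * (!![M, 1; 0, M⁻¹])⁻¹) ^ m
        * (!![M, 0; 2 - y, M⁻¹] * !![M, 1; 0, M⁻¹])
        * ((!![M, 0; 2 - y, M⁻¹])⁻¹ * !![M, 1; 0, M⁻¹]) ^ m) :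
    W 0 0 + (M⁻¹ - M) * W 0 1
      = 1 + (y + 2 - (M + M⁻¹)^2) * (chebS ℂ (m - 1)).eval y
            * ((chebS ℂ m).eval y - (chebS ℂ (m - 1)).eval y) := by
  set P := !![M, 1; 0, M⁻¹] with hP
  set Q := !![M, 0; 2 - y, M⁻¹] with hQ
  have hPdet : P.det = 1 := by simp [P, Matrix.det_fin_two_of, hM]
  have hQdet : Q.det = 1 := by simp [Q, Matrix.det_fin_two_of, hM]
  have hA : Q * P⁻¹ = !![1, -M; (2 - y) * M⁻¹, y - 1] := by
    rw [Matrix.inv_eq_adjugate_of_det_eq_one hPdet, Matrix.adjugate_fin_two_of, Matrix.mul_fin_two]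
    congr <;> field_simp <;> ring
  have hB : Q⁻¹ * P = !![1, M⁻¹; (y - 2) * M, y - 1] := by
    rw [Matrix.inv_eq_adjugate_of_det_eq_one hQdet, Matrix.adjugate_fin_two_of, Matrix.mul_fin_two]
    congr <;> field_simp <;> ring
  have hAdet : (Q * P⁻¹).det = 1 := by rw [hA, Matrix.det_fin_two_of]; field_simp; ring
  have hBdet : (Q⁻¹ * P).det = 1 := by rw [hB, Matrix.det_fin_two_of]; field_simp; ring
  rw [hW, Matrix.zpow_fin_two_eq_of_det_eq_one hAdet, Matrix.zpow_fin_two_eq_of_det_eq_one hBdet,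
    hA, hB, Matrix.trace_fin_two_of, Matrix.trace_fin_two_of, add_sub_cancel, chebS_eq_S,
    Chebyshev.S_eq ℂ m]
  have hcassini := congrArg (eval y) (Chebyshev.S_sq_add_S_sq ℂ (m - 2))
  rw [show m - 2 + 1 = m - 1 by ring] at hcassini
  simp only [eval_sub, eval_add, eval_mul, eval_pow, eval_X, eval_one] at hcassini
  simp only [hP, hQ, Matrix.mul_apply, Fin.sum_univ_two, Matrix.sub_apply, Matrix.smul_apply,
    Matrix.one_fin_two, Matrix.of_apply, Matrix.cons_val', Matrix.cons_val_zero,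
    Matrix.cons_val_one, Matrix.cons_val_fin_one, smul_eq_mul, eval_sub, eval_mul, eval_X]
  field_simp
  linear_combination M ^ 3 * hcassini
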